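/- If two words w and w' over the positive integers are Knuth equivalent, then the words obtained from each by deleting all occurrences of letters strictly greater than some threshold m are also Knuth equivalent. -/

import Mathlib

/-- Elementary Knuth transformations on consecutive triples of letters:
`y z x → y x z` when `x < y ≤ z`, and `x z y → z x y` when `x ≤ y < z`. -/
inductive KnuthStep : List ℕ → List ℕ → Prop
  | k1 (u v : List ℕ) (x y z : ℕ) (h1 : x < y) (h2 : y ≤ z) :
      KnuthStep (u ++ y :: z :: x :: v) (u ++ y :: x :: z :: v)
  | k2 (u v : List ℕ) (x y z : ℕ) (h1 : x ≤ y) (h2 : y < z) :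
      KnuthStep (u ++ x :: z :: y :: v) (u ++ z :: x :: y :: v)

/-- Knuth equivalence: the equivalence relation generated by the elementary
Knuth transformations. -/
def KnuthEquiv : List ℕ → List ℕ → Prop := Relation.EqvGen KnuthStep

lemma knuthStep_filter_le (m : ℕ) {a b : List ℕ} (h : KnuthStep a b) :
    KnuthEquiv (a.filter (fun x => x ≤ m)) (b.filter (fun x => x ≤ m)) := by
  cases h with
  | k1 u v x y z h1 h2 =>
    simp only [List.filter_append, List.filter_cons]
    rcases le_or_gt z m with hz | hz
    · have hy : y ≤ m := h2.trans hz
      have hx : x ≤ m := h1.le.trans hy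
      simp only [hx, hy, hz, decide_true, if_true]
      exact Relation.EqvGen.rel _ _ (KnuthStep.k1 _ _ x y z h1 h2)
    · rcases le_or_gt y m with hy | hy
      · have hx : x ≤ m := h1.le.trans hy
        simp only [hx, hy, hz.not_ge, decide_true, decide_false, if_true, if_false]
        exact Relation.EqvGen.refl _
      · rcases le_or_gt x m with hx | hx
        · simp only [hx, hy.not_ge, hz.not_ge, decide_true, decide_false, if_true, if_false]
          exact Relation.EqvGen.refl _
        · simp only [hx.not_ge, hy.not_ge, hz.not_ge, decide_false, if_false]
          exact Relation.EqvGen.refl _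
  | k2 u v x y z h1 h2 =>
    simp only [List.filter_append, List.filter_cons]
    rcases le_or_gt z m with hz | hz
    · have hy : y ≤ m := h2.le.trans hz
      have hx : x ≤ m := h1.trans hy
      simp only [hx, hy, hz, decide_true, if_true]
      exact Relation.EqvGen.rel _ _ (KnuthStep.k2 _ _ x y z h1 h2)
    · rcases le_or_gt y m with hy | hy
      · have hx : x ≤ m := h1.trans hy
        simp only [hx, hy, hz.not_ge, decide_true, decide_false, if_true, if_false]
        exact Relation.EqvGen.refl _
      · rcases le_or_gt x m with hx | hx
        · simp only [hx, hy.not_ge, hz.not_ge, decide_true, decide_false, if_true, if_false]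
          exact Relation.EqvGen.refl _
        · simp only [hx.not_ge, hy.not_ge, hz.not_ge, decide_false, if_false]
          exact Relation.EqvGen.refl _

/-- If two words are Knuth equivalent, then the words obtained by deleting all
letters strictly greater than a threshold `m` are also Knuth equivalent. -/
theorem knuthEquiv_filter_le (m : ℕ) (w w' : List ℕ) (h : KnuthEquiv w w') :
    KnuthEquiv (w.filter (fun x => x ≤ m)) (w'.filter (fun x => x ≤ m)) := by
  induction h with
  | rel a b hab => exact knuthStep_filter_le m hab
  | refl a => exact Relation.EqvGen.refl _
  | symm a b _ ih => exact Relation.EqvGen.symm _ _ ih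
  | trans a b c _ _ ih1 ih2 => exact Relation.EqvGen.trans _ _ _ ih1 ih2
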